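/- Let μ ∈ (0, 1), α ∈ ℝ and β > 0, and define y(t) = (α/β)·(1 − E_μ(−β·t^μ)) for t ≥ 0. Then y(0) = 0, y is differentiable on (0, ∞), and for every t > 0 it satisfies the fractional relaxation equation (1/Γ(1−μ))·∫_0^t (t − τ)^{−μ}·y'(τ) dτ = α − β·y(t). Consequently V_μ(t) = V₀·exp(y(t)) is the solution of the fractional Gompertz model of Bolton et al. with V_μ(0) = V₀. -/

import Mathlib

/-!
Expand `E_μ(c s^μ) = ∑ cⁿ s^{μn} / Γ(μn + 1)`. On `(0, ∞)` this series may be differentiated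
term by term, and the Caputo integral may be taken term by term, since the integrals of the
absolute values form the same series with `|c|` in place of `c`. By the Beta integral the Caputo
derivative of `s^{μ(n+1)} / Γ(μ(n+1) + 1)` is `s^{μn} / Γ(μn + 1)`, so the Caputo derivative of
`E_μ(c s^μ)` is `c E_μ(c t^μ)`; with `c = -β` this is the relaxation equation for the affine
function `y` of `E_μ(-β s^μ)`. All series converge because `Γ(x + μ) ≥ Γ(x) (x + μ - 1)^μ`,
by log-convexity of `Γ`.
-/

open MeasureTheory

/-- The Mittag-Leffler function of parameter `μ > 0`:
`E_μ(x) = ∑' k, x^k / Γ(μ·k + 1)`. -/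
noncomputable def mittagLeffler (μ x : ℝ) : ℝ := ∑' k : ℕ, x ^ k / Real.Gamma (μ * k + 1)

open Real Filter Set

theorem Gamma_mul_rpow_le_Gamma_add {μ x : ℝ} (hμ : 0 < μ) (hμ1 : μ < 1) (hx : 1 - μ < x) :
    Gamma x * (x + μ - 1) ^ μ ≤ Gamma (x + μ) := by
  have hx' : 0 < x + μ - 1 := by linarith
  have hΓ : 0 < Gamma (x + μ) := Gamma_pos_of_pos (by linarith)
  -- log-convexity of `Γ` at `x = (1 - μ) (x + μ) + μ (x + μ - 1)`
  have hconv := Gamma_mul_add_mul_le_rpow_Gamma_mul_rpow_Gamma (s := x + μ) (by linarith) hx'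
    (sub_pos.2 hμ1) hμ (sub_add_cancel 1 μ)
  have hrec : Gamma (x + μ - 1) = Gamma (x + μ) / (x + μ - 1) := by
    rw [eq_div_iff hx'.ne', mul_comm, ← Gamma_add_one hx'.ne', sub_add_cancel]
  rw [show (1 - μ) * (x + μ) + μ * (x + μ - 1) = x by ring, hrec,
    div_rpow hΓ.le hx'.le] at hconv
  calc Gamma x * (x + μ - 1) ^ μ
      ≤ Gamma (x + μ) ^ (1 - μ) * (Gamma (x + μ) ^ μ / (x + μ - 1) ^ μ) * (x + μ - 1) ^ μ := by
        gcongr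
    _ = Gamma (x + μ) := by
        rw [mul_assoc, div_mul_cancel₀ _ (rpow_pos_of_pos hx' μ).ne', ← rpow_add hΓ,
          sub_add_cancel, rpow_one]

theorem summable_pow_div_Gamma {μ c : ℝ} (hμ : 0 < μ) (hμ1 : μ < 1) (hc : 0 < c) (r : ℝ) :
    Summable fun k : ℕ => r ^ k / Gamma (μ * k + c) := by
  have hlin : Tendsto (fun k : ℕ => μ * k + c) atTop atTop :=
    tendsto_atTop_add_const_right _ c
      ((tendsto_natCast_atTop_atTop (R := ℝ)).const_mul_atTop hμ)
  have hpow : Tendsto (fun k : ℕ => (μ * k + c + μ - 1) ^ μ) atTop atTop :=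
    (tendsto_rpow_atTop hμ).comp (tendsto_atTop_add_const_right _ (μ - 1) hlin |>.congr
      fun k => by ring)
  refine summable_of_ratio_norm_eventually_le (r := 1 / 2) (by norm_num) ?_
  filter_upwards [hlin.eventually_gt_atTop (1 - μ), hpow.eventually_ge_atTop (2 * |r| + 1)]
    with k hk hk'
  set x := μ * (k : ℝ) + c
  have hΓ : 0 < Gamma x := Gamma_pos_of_pos (by positivity)
  have hΓ' : Gamma x * (2 * |r| + 1) ≤ Gamma (x + μ) :=
    (mul_le_mul_of_nonneg_left hk' hΓ.le).trans (Gamma_mul_rpow_le_Gamma_add hμ hμ1 hk)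
  have hsucc : μ * ((k + 1 : ℕ) : ℝ) + c = x + μ := by push_cast; ring
  have hΓμ : 0 < Gamma (x + μ) := Gamma_pos_of_pos (by positivity)
  rw [hsucc, norm_div, norm_div, norm_pow, norm_pow, norm_of_nonneg hΓ.le, norm_of_nonneg hΓμ.le,
    Real.norm_eq_abs]
  calc |r| ^ (k + 1) / Gamma (x + μ)
      ≤ |r| ^ (k + 1) / (Gamma x * (2 * |r| + 1)) := by gcongr
    _ = |r| / (2 * |r| + 1) * (|r| ^ k / Gamma x) := by rw [pow_succ]; field_simp
    _ ≤ 1 / 2 * (|r| ^ k / Gamma x) := by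
        refine mul_le_mul_of_nonneg_right ?_ (by positivity)
        rw [div_le_div_iff₀ (by positivity) (by norm_num)]
        linarith [abs_nonneg r]

theorem summable_natCast_mul_pow_div_Gamma {μ c : ℝ} (hμ : 0 < μ) (hμ1 : μ < 1) (hc : 0 < c)
    (r : ℝ) : Summable fun k : ℕ => k * r ^ k / Gamma (μ * k + c) := by
  refine (summable_pow_div_Gamma hμ hμ1 hc (2 * |r|)).of_norm_bounded fun k => ?_
  have hΓ : 0 < Gamma (μ * k + c) := Gamma_pos_of_pos (by positivity)
  rw [norm_div, norm_of_nonneg hΓ.le, norm_mul, norm_pow, Real.norm_natCast, Real.norm_eq_abs,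
    mul_pow]
  gcongr
  exact_mod_cast Nat.lt_two_pow_self.le

theorem mittagLeffler_zero (μ : ℝ) : mittagLeffler μ 0 = 1 := by
  rw [mittagLeffler, tsum_eq_single 0 fun k hk => by rw [zero_pow hk, zero_div]]
  simp

noncomputable def mittagLefflerTerm (μ c : ℝ) (n : ℕ) (s : ℝ) : ℝ :=
  c ^ n / Gamma (μ * n + 1) * s ^ (μ * n)

noncomputable def mittagLefflerTermDeriv (μ c : ℝ) (n : ℕ) (s : ℝ) : ℝ :=
  c ^ n / Gamma (μ * n + 1) * (μ * n * s ^ (μ * n - 1))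

@[simp]
theorem mittagLefflerTermDeriv_zero (μ c : ℝ) : mittagLefflerTermDeriv μ c 0 = 0 := by
  ext s
  simp [mittagLefflerTermDeriv]

theorem mittagLefflerTerm_eq {s : ℝ} (hs : 0 ≤ s) (μ c : ℝ) (n : ℕ) :
    mittagLefflerTerm μ c n s = (c * s ^ μ) ^ n / Gamma (μ * n + 1) := by
  rw [mittagLefflerTerm, mul_pow, ← rpow_natCast (s ^ μ), ← rpow_mul hs]
  ring

theorem mittagLeffler_mul_rpow_eq_tsum {s : ℝ} (hs : 0 ≤ s) (μ c : ℝ) :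
    mittagLeffler μ (c * s ^ μ) = ∑' n, mittagLefflerTerm μ c n s :=
  tsum_congr fun n => (mittagLefflerTerm_eq hs μ c n).symm

theorem summable_mittagLefflerTerm {μ s : ℝ} (hμ : 0 < μ) (hμ1 : μ < 1) (hs : 0 ≤ s) (c : ℝ) :
    Summable fun n => mittagLefflerTerm μ c n s := by
  simpa only [mittagLefflerTerm_eq hs] using summable_pow_div_Gamma hμ hμ1 one_pos (c * s ^ μ)

theorem hasDerivAt_mittagLefflerTerm (μ c : ℝ) (n : ℕ) {s : ℝ} (hs : 0 < s) :
    HasDerivAt (mittagLefflerTerm μ c n) (mittagLefflerTermDeriv μ c n s) s :=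
  (hasDerivAt_rpow_const (Or.inl hs.ne')).const_mul _

theorem norm_mittagLefflerTermDeriv_le {μ a b x : ℝ} (hμ : 0 ≤ μ) (ha : 0 < a) (hax : a ≤ x)
    (hxb : x ≤ b) (c : ℝ) (n : ℕ) :
    ‖mittagLefflerTermDeriv μ c n x‖ ≤ μ / a * (n * (|c| * b ^ μ) ^ n / Gamma (μ * n + 1)) := by
  have hx : 0 < x := ha.trans_le hax
  have hΓ : 0 < Gamma (μ * n + 1) := Gamma_pos_of_pos (by positivity)
  have hpow : x ^ (μ * n) ≤ (b ^ μ) ^ n := by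
    rw [← rpow_natCast, ← rpow_mul (hx.le.trans hxb)]
    exact rpow_le_rpow hx.le hxb (by positivity)
  have hb : 0 ≤ (b ^ μ) ^ n := pow_nonneg (rpow_nonneg (hx.le.trans hxb) μ) n
  rw [mittagLefflerTermDeriv, rpow_sub_one hx.ne', norm_mul, norm_div, norm_pow,
    norm_of_nonneg hΓ.le, Real.norm_eq_abs,
    norm_of_nonneg (by positivity : 0 ≤ μ * n * (x ^ (μ * n) / x))]
  calc |c| ^ n / Gamma (μ * n + 1) * (μ * n * (x ^ (μ * n) / x))
      ≤ |c| ^ n / Gamma (μ * n + 1) * (μ * n * ((b ^ μ) ^ n / a)) := by gcongr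
    _ = μ / a * (n * (|c| * b ^ μ) ^ n / Gamma (μ * n + 1)) := by rw [mul_pow]; ring

theorem hasDerivAt_mittagLeffler_mul_rpow {μ t : ℝ} (hμ : 0 < μ) (hμ1 : μ < 1) (ht : 0 < t)
    (c : ℝ) :
    HasDerivAt (fun s => mittagLeffler μ (c * s ^ μ))
      (∑' n, mittagLefflerTermDeriv μ c n t) t := by
  have ht' : t ∈ Ioo (t / 2) (2 * t) := ⟨by linarith, by linarith⟩
  have hseries : HasDerivAt (fun s => ∑' n, mittagLefflerTerm μ c n s)
      (∑' n, mittagLefflerTermDeriv μ c n t) t :=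
    hasDerivAt_tsum_of_isPreconnected
      ((summable_natCast_mul_pow_div_Gamma hμ hμ1 one_pos (|c| * (2 * t) ^ μ)).mul_left
        (μ / (t / 2)))
      isOpen_Ioo isPreconnected_Ioo
      (fun n x hx => hasDerivAt_mittagLefflerTerm μ c n ((half_pos ht).trans hx.1))
      (fun n x hx => norm_mittagLefflerTermDeriv_le hμ.le (half_pos ht) hx.1.le hx.2.le c n)
      ht' (summable_mittagLefflerTerm hμ hμ1 ht.le c) ht'
  refine hseries.congr_of_eventuallyEq ?_
  filter_upwards [Ioo_mem_nhds ht'.1 ht'.2] with s hs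
  exact mittagLeffler_mul_rpow_eq_tsum ((half_pos ht).trans hs.1).le μ c

theorem integrableOn_rpow_mul_sub_rpow {a b t : ℝ} (ha : -1 < a) (hb : -1 < b) (ht : 0 < t) :
    IntegrableOn (fun τ => τ ^ a * (t - τ) ^ b) (Ioo 0 t) := by
  have hleft : IntervalIntegrable (fun τ => τ ^ a * (t - τ) ^ b) volume 0 (t / 2) := by
    refine (intervalIntegral.intervalIntegrable_rpow' ha).mul_continuousOn fun x hx => ?_
    rw [uIcc_of_le (by linarith)] at hx
    exact (continuousAt_const.sub continuousAt_id).rpow_const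
      (Or.inl (by simp only [Pi.sub_apply, id]; linarith [hx.2])) |>.continuousWithinAt
  have hright : IntervalIntegrable (fun τ => τ ^ a * (t - τ) ^ b) volume (t / 2) t := by
    have hsub :=
      (intervalIntegral.intervalIntegrable_rpow' hb (a := 0) (b := t / 2)).comp_sub_left t
    rw [sub_zero, sub_half] at hsub
    refine hsub.symm.continuousOn_mul fun x hx => ?_
    rw [uIcc_of_le (by linarith)] at hx
    exact continuousAt_id.rpow_const (Or.inl (by simp only [id]; linarith [hx.1]))
      |>.continuousWithinAt
  exact ((hleft.trans hright).1).mono_set Ioo_subset_Ioc_self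

theorem integral_rpow_mul_sub_rpow {a b t : ℝ} (ha : -1 < a) (hb : -1 < b) (ht : 0 < t) :
    ∫ τ in Ioo 0 t, τ ^ a * (t - τ) ^ b =
      Gamma (a + 1) * Gamma (b + 1) / Gamma (a + b + 2) * t ^ (a + b + 1) := by
  have hscaled := Complex.betaIntegral_scaled (a + 1 : ℝ) (b + 1 : ℝ) ht
  rw [Complex.betaIntegral_eq_Gamma_mul_div _ _ (by simp; linarith) (by simp; linarith)] at hscaled
  have hofReal : ∫ x in (0 : ℝ)..t, (x : ℂ) ^ (((a + 1 : ℝ) : ℂ) - 1) *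
        ((t : ℂ) - x) ^ (((b + 1 : ℝ) : ℂ) - 1) =
      ∫ x in (0 : ℝ)..t, ((x ^ a * (t - x) ^ b : ℝ) : ℂ) := by
    refine intervalIntegral.integral_congr fun x hx => ?_
    rw [uIcc_of_le ht.le] at hx
    simp only [Complex.ofReal_add, Complex.ofReal_one, add_sub_cancel_right, Complex.ofReal_mul,
      Complex.ofReal_cpow hx.1, Complex.ofReal_cpow (sub_nonneg.2 hx.2), Complex.ofReal_sub]
  have hexp : ((a + 1 : ℝ) : ℂ) + ((b + 1 : ℝ) : ℂ) - 1 = ((a + b + 1 : ℝ) : ℂ) := by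
    push_cast; ring
  rw [hofReal, intervalIntegral.integral_ofReal, hexp, ← Complex.ofReal_cpow ht.le,
    ← Complex.ofReal_add, Complex.Gamma_ofReal, Complex.Gamma_ofReal, Complex.Gamma_ofReal,
    show a + 1 + (b + 1) = a + b + 2 by ring] at hscaled
  rw [← integral_Ioc_eq_integral_Ioo, ← intervalIntegral.integral_of_le ht.le, mul_comm]
  exact_mod_cast hscaled

noncomputable def caputoDeriv (μ : ℝ) (f : ℝ → ℝ) (t : ℝ) : ℝ :=
  1 / Gamma (1 - μ) * ∫ τ in Ioo 0 t, (t - τ) ^ (-μ) * deriv f τ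

theorem caputoDeriv_const_add_mul (μ a b : ℝ) (f : ℝ → ℝ) (t : ℝ) :
    caputoDeriv μ (fun s => a + b * f s) t = b * caputoDeriv μ f t := by
  simp only [caputoDeriv, deriv_const_add', deriv_const_mul_field', mul_left_comm _ b,
    integral_const_mul]

theorem sub_rpow_mul_mittagLefflerTermDeriv_eq (μ c t : ℝ) (n : ℕ) :
    (fun τ => (t - τ) ^ (-μ) * mittagLefflerTermDeriv μ c n τ) =
      fun τ => c ^ n / Gamma (μ * n + 1) * (μ * n) * (τ ^ (μ * n - 1) * (t - τ) ^ (-μ)) := by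
  ext τ
  rw [mittagLefflerTermDeriv]
  ring

theorem integral_norm_sub_rpow_mul_mittagLefflerTermDeriv {μ : ℝ} (hμ : 0 ≤ μ) (c t : ℝ)
    (n : ℕ) :
    ∫ τ in Ioo 0 t, ‖(t - τ) ^ (-μ) * mittagLefflerTermDeriv μ c n τ‖ =
      ∫ τ in Ioo 0 t, (t - τ) ^ (-μ) * mittagLefflerTermDeriv μ |c| n τ := by
  refine setIntegral_congr_fun measurableSet_Ioo fun τ hτ => ?_
  have hΓ : 0 < Gamma (μ * n + 1) := Gamma_pos_of_pos (by positivity)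
  have hτt : 0 ≤ t - τ := sub_nonneg.2 hτ.2.le
  simp only [congrFun (sub_rpow_mul_mittagLefflerTermDeriv_eq μ _ t n) τ, norm_mul, norm_div,
    norm_pow, Real.norm_eq_abs, abs_of_pos hΓ, abs_of_nonneg hμ, Nat.abs_cast,
    abs_of_nonneg (rpow_nonneg hτ.1.le _), abs_of_nonneg (rpow_nonneg hτt _)]

section CaputoMittagLeffler

variable {μ t : ℝ} (hμ : 0 < μ) (hμ1 : μ < 1) (ht : 0 < t) (c : ℝ)
include hμ hμ1 ht

theorem integrableOn_sub_rpow_mul_mittagLefflerTermDeriv (n : ℕ) :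
    IntegrableOn (fun τ => (t - τ) ^ (-μ) * mittagLefflerTermDeriv μ c n τ) (Ioo 0 t) := by
  rw [sub_rpow_mul_mittagLefflerTermDeriv_eq]
  rcases n with _ | n
  · simp
  · have hn : 0 < μ * (n + 1 : ℕ) := by positivity
    exact (integrableOn_rpow_mul_sub_rpow (by linarith) (neg_lt_neg hμ1) ht).const_mul _

theorem integral_sub_rpow_mul_mittagLefflerTermDeriv_succ (n : ℕ) :
    ∫ τ in Ioo 0 t, (t - τ) ^ (-μ) * mittagLefflerTermDeriv μ c (n + 1) τ =
      Gamma (1 - μ) * c * mittagLefflerTerm μ c n t := by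
  have hn : 0 < μ * (n + 1 : ℕ) := by positivity
  have hΓ : Gamma (μ * (n + 1 : ℕ) + 1) = μ * (n + 1 : ℕ) * Gamma (μ * (n + 1 : ℕ)) :=
    Gamma_add_one hn.ne'
  have hΓn : 0 < Gamma (μ * (n + 1 : ℕ)) := Gamma_pos_of_pos hn
  rw [sub_rpow_mul_mittagLefflerTermDeriv_eq, integral_const_mul,
    integral_rpow_mul_sub_rpow (by linarith) (neg_lt_neg hμ1) ht, hΓ, mittagLefflerTerm]
  have hexp : μ * (n + 1 : ℕ) - 1 + 1 = μ * (n + 1 : ℕ) := by ring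
  have hexp' : μ * (n + 1 : ℕ) - 1 + -μ + 2 = μ * n + 1 := by push_cast; ring
  have hexp'' : μ * (n + 1 : ℕ) - 1 + -μ + 1 = μ * n := by push_cast; ring
  rw [hexp, hexp', hexp'', neg_add_eq_sub]
  field_simp
  ring

theorem integral_sub_rpow_mul_tsum_mittagLefflerTermDeriv :
    ∫ τ in Ioo 0 t, (t - τ) ^ (-μ) * ∑' n, mittagLefflerTermDeriv μ c n τ =
      Gamma (1 - μ) * c * mittagLeffler μ (c * t ^ μ) := by
  have hsummable : Summable fun n =>
      ∫ τ in Ioo 0 t, ‖(t - τ) ^ (-μ) * mittagLefflerTermDeriv μ c n τ‖ := by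
    simp only [integral_norm_sub_rpow_mul_mittagLefflerTermDeriv hμ.le c t]
    rw [← summable_nat_add_iff 1]
    simp only [integral_sub_rpow_mul_mittagLefflerTermDeriv_succ hμ hμ1 ht]
    exact (summable_mittagLefflerTerm hμ hμ1 ht.le |c|).mul_left _
  have hterms : Summable fun n =>
      ∫ τ in Ioo 0 t, (t - τ) ^ (-μ) * mittagLefflerTermDeriv μ c n τ :=
    hsummable.of_norm_bounded fun n => norm_integral_le_integral_norm _
  simp_rw [← tsum_mul_left]
  rw [← integral_tsum_of_summable_integral_norm
      (integrableOn_sub_rpow_mul_mittagLefflerTermDeriv hμ hμ1 ht c) hsummable,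
    hterms.tsum_eq_zero_add, mittagLeffler_mul_rpow_eq_tsum ht.le, ← tsum_mul_left]
  simp only [mittagLefflerTermDeriv_zero, Pi.zero_apply, mul_zero, integral_zero, zero_add]
  exact tsum_congr (integral_sub_rpow_mul_mittagLefflerTermDeriv_succ hμ hμ1 ht c)

theorem caputoDeriv_mittagLeffler_mul_rpow :
    caputoDeriv μ (fun s => mittagLeffler μ (c * s ^ μ)) t = c * mittagLeffler μ (c * t ^ μ) := by
  have hΓ : 0 < Gamma (1 - μ) := Gamma_pos_of_pos (sub_pos.2 hμ1)
  rw [caputoDeriv, setIntegral_congr_fun measurableSet_Ioo fun τ hτ => by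
      rw [(hasDerivAt_mittagLeffler_mul_rpow hμ hμ1 hτ.1 c).deriv],
    integral_sub_rpow_mul_tsum_mittagLefflerTermDeriv hμ hμ1 ht]
  field_simp

end CaputoMittagLeffler

theorem bolton_fractional_gompertz_relaxation_general
    (μ α β V₀ : ℝ) (hμ : 0 < μ) (hμ1 : μ < 1) (hβ : 0 < β)
    (y : ℝ → ℝ)
    (hy : ∀ t : ℝ, y t = (α / β) * (1 - mittagLeffler μ (-β * t ^ μ))) :
    y 0 = 0 ∧
    (∀ t > (0 : ℝ), DifferentiableAt ℝ y t) ∧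
    (∀ t > (0 : ℝ),
      (1 / Real.Gamma (1 - μ)) *
          ∫ τ in Set.Ioo (0 : ℝ) t, (t - τ) ^ (-μ) * deriv y τ
        = α - β * y t) ∧
    V₀ * Real.exp (y 0) = V₀ := by
  have hy0 : y 0 = 0 := by
    rw [hy, zero_rpow hμ.ne', mul_zero, mittagLeffler_zero, sub_self, mul_zero]
  refine ⟨hy0, fun t ht => ?_, fun t ht => ?_, by rw [hy0, exp_zero, mul_one]⟩
  all_goals
    obtain rfl : y = fun s => α / β + -(α / β) * mittagLeffler μ (-β * s ^ μ) :=
      funext fun s => by rw [hy]; ring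
  · exact ((hasDerivAt_mittagLeffler_mul_rpow hμ hμ1 ht _).differentiableAt.const_mul _).const_add
      _
  · change caputoDeriv μ _ t = _
    rw [caputoDeriv_const_add_mul, caputoDeriv_mittagLeffler_mul_rpow hμ hμ1 ht]
    field_simp
    ring

/-- **The Bolton et al. fractional Gompertz law solves the fractional relaxation
equation.** Let `μ ∈ (0, 1)`, `α ∈ ℝ`, `β > 0`, and define
`y(t) = (α/β)·(1 − E_μ(−β·t^μ))`. Then `y 0 = 0`, `y` is differentiable on `(0, ∞)`,
and for every `t > 0` it satisfies
`(1/Γ(1−μ))·∫_0^t (t − τ)^(−μ)·y'(τ) dτ = α − β·y(t)`.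
Consequently `V_μ(t) = V₀·exp(y t)` solves the fractional Gompertz model of Bolton
et al. with `V_μ(0) = V₀`. -/
theorem bolton_fractional_gompertz_relaxation
    (μ α β V₀ : ℝ) (hμ : 0 < μ) (hμ1 : μ < 1) (hβ : 0 < β) (hV₀ : 0 < V₀)
    (y : ℝ → ℝ)
    (hy : ∀ t : ℝ, y t = (α / β) * (1 - mittagLeffler μ (-β * t ^ μ))) :
    y 0 = 0 ∧
    (∀ t > (0 : ℝ), DifferentiableAt ℝ y t) ∧
    (∀ t > (0 : ℝ),
      (1 / Real.Gamma (1 - μ)) *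
          ∫ τ in Set.Ioo (0 : ℝ) t, (t - τ) ^ (-μ) * deriv y τ
        = α - β * y t) ∧
    V₀ * Real.exp (y 0) = V₀ :=
  bolton_fractional_gompertz_relaxation_general μ α β V₀ hμ hμ1 hβ y hy
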